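/- Fix β > 0 and C > 0. Then ∫₀^{2C/β} 4C√β · f(2C, 0, u) du = log( 1 + (2√(2π)·C/√β)·e^{C²/(2β)}·Erf(C/√(2β)) ). -/

import Mathlib

/-- The error function `Erf x = (2/√π)·∫₀ˣ e^{−u²} du`. -/
noncomputable def Erf (x : ℝ) : ℝ :=
  (2 / Real.sqrt Real.pi) * ∫ u in (0:ℝ)..x, Real.exp (-u ^ 2)

/-- `f(a,b,t)` from the SQF limit-cycle analysis (for parameters `β`, `C`). -/
noncomputable def f (β C a b t : ℝ) : ℝ :=
  Real.exp (-(t / 2) * (2 * b - 2 * C + β * t)) /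
    (2 * Real.sqrt β +
      a * Real.exp ((b - C) ^ 2 / (2 * β)) * Real.sqrt (2 * Real.pi) *
        (Erf ((b - C + β * t) / Real.sqrt (2 * β)) -
         Erf ((b - C) / Real.sqrt (2 * β))))

/-!
The denominator `D(t)` of `f(a, b, t)` has derivative `2a√β` times its numerator: the Gaussian
factor `e^{-(b-C+βt)²/(2β)}` coming from `Erf'` combines with `e^{(b-C)²/(2β)}` into
`e^{-(t/2)(2b-2C+βt)}`. Hence `2a√β · f(a, b, ·) = D'/D`, whose integral is `log D(T) - log D(0)`,
and `D(0) = 2√β`. For `a = 2C`, `b = 0`, `T = 2C/β` the two `Erf` arguments are `±C/√(2β)`, so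
oddness of `Erf` gives the closed form.
-/

open Real Set

theorem intervalIntegral.integral_deriv_div_eq_log_sub {D D' : ℝ → ℝ} {a b : ℝ}
    (hD : ∀ x ∈ uIcc a b, HasDerivAt D (D' x) x) (hD' : ContinuousOn D' (uIcc a b))
    (hD0 : ∀ x ∈ uIcc a b, D x ≠ 0) :
    ∫ x in a..b, D' x / D x = log (D b) - log (D a) := by
  have hDcont : ContinuousOn D (uIcc a b) := fun x hx =>
    (hD x hx).continuousAt.continuousWithinAt
  refine intervalIntegral.integral_eq_sub_of_hasDerivAt (fun x hx => (hD x hx).log (hD0 x hx)) ?_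
  exact (hD'.div hDcont hD0).intervalIntegrable

theorem hasDerivAt_Erf (x : ℝ) : HasDerivAt Erf (2 / √π * exp (-x ^ 2)) x := by
  have hcont : Continuous fun u : ℝ => exp (-u ^ 2) := by fun_prop
  exact (intervalIntegral.integral_hasDerivAt_right (hcont.intervalIntegrable 0 x)
    hcont.stronglyMeasurable.stronglyMeasurableAtFilter hcont.continuousAt).const_mul _

theorem monotone_Erf : Monotone Erf :=
  monotone_of_deriv_nonneg (fun x => (hasDerivAt_Erf x).differentiableAt) fun x => by
    rw [(hasDerivAt_Erf x).deriv]; positivity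

@[simp] theorem Erf_zero : Erf 0 = 0 := by simp [Erf]

theorem Erf_neg (x : ℝ) : Erf (-x) = -Erf x := by
  have h := intervalIntegral.integral_comp_neg (a := 0) (b := x) fun u => exp (-u ^ 2)
  simp only [neg_zero, neg_sq] at h
  rw [Erf, Erf, intervalIntegral.integral_symm, ← h, mul_neg]

theorem Erf_nonneg {x : ℝ} (hx : 0 ≤ x) : 0 ≤ Erf x :=
  Erf_zero ▸ monotone_Erf hx

theorem hasDerivAt_scaled_Erf {β : ℝ} (hβ : 0 < β) (c t : ℝ) :
    HasDerivAt (fun t => √(2 * π) * exp (c ^ 2 / (2 * β)) * Erf ((c + β * t) / √(2 * β)))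
      (2 * √β * exp (-(t / 2) * (2 * c + β * t))) t := by
  have hinner : HasDerivAt (fun t => (c + β * t) / √(2 * β)) (β / √(2 * β)) t := by
    simpa using (((hasDerivAt_id t).const_mul β).const_add c).div_const √(2 * β)
  refine (((hasDerivAt_Erf _).comp t hinner).const_mul
    (√(2 * π) * exp (c ^ 2 / (2 * β)))).congr_deriv ?_
  have hexp : exp (-(t / 2) * (2 * c + β * t)) =
      exp (c ^ 2 / (2 * β)) * exp (-((c + β * t) / √(2 * β)) ^ 2) := by
    rw [← exp_add, div_pow, sq_sqrt (by positivity)]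
    congr 1
    field_simp
    ring
  rw [hexp, sqrt_mul zero_le_two, sqrt_mul zero_le_two]
  field_simp
  rw [sq_sqrt hβ.le]

noncomputable def fDenom (β C a b t : ℝ) : ℝ :=
  2 * √β + a * exp ((b - C) ^ 2 / (2 * β)) * √(2 * π) *
    (Erf ((b - C + β * t) / √(2 * β)) - Erf ((b - C) / √(2 * β)))

theorem f_eq_div_fDenom (β C a b t : ℝ) :
    f β C a b t = exp (-(t / 2) * (2 * b - 2 * C + β * t)) / fDenom β C a b t := rfl

@[simp] theorem fDenom_zero (β C a b : ℝ) : fDenom β C a b 0 = 2 * √β := by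
  simp [fDenom]

theorem hasDerivAt_fDenom {β : ℝ} (hβ : 0 < β) (C a b t : ℝ) :
    HasDerivAt (fDenom β C a b) (2 * a * √β * exp (-(t / 2) * (2 * b - 2 * C + β * t))) t := by
  have h := (((hasDerivAt_scaled_Erf hβ (b - C) t).sub_const
    (√(2 * π) * exp ((b - C) ^ 2 / (2 * β)) * Erf ((b - C) / √(2 * β)))).const_mul a).const_add
    (2 * √β)
  have hD : fDenom β C a b = fun t => 2 * √β + a * (√(2 * π) * exp ((b - C) ^ 2 / (2 * β)) *
      Erf ((b - C + β * t) / √(2 * β)) -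
        √(2 * π) * exp ((b - C) ^ 2 / (2 * β)) * Erf ((b - C) / √(2 * β))) := by
    funext t; rw [fDenom]; ring
  rw [hD]
  refine h.congr_deriv ?_
  rw [show 2 * b - 2 * C + β * t = 2 * (b - C) + β * t by ring]
  ring

theorem fDenom_pos {β : ℝ} (hβ : 0 < β) (C : ℝ) {a : ℝ} (ha : 0 ≤ a) (b : ℝ) {t : ℝ}
    (ht : 0 ≤ t) : 0 < fDenom β C a b t := by
  have hErf : Erf ((b - C) / √(2 * β)) ≤ Erf ((b - C + β * t) / √(2 * β)) :=
    monotone_Erf (div_le_div_of_nonneg_right (by nlinarith) (sqrt_nonneg _))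
  have := sub_nonneg.2 hErf
  rw [fDenom]
  positivity

theorem integral_mul_f {β : ℝ} (hβ : 0 < β) (C : ℝ) {a : ℝ} (ha : 0 ≤ a) (b : ℝ) {T : ℝ}
    (hT : 0 ≤ T) :
    ∫ u in (0:ℝ)..T, 2 * a * √β * f β C a b u = log (fDenom β C a b T) - log (2 * √β) := by
  simp_rw [f_eq_div_fDenom, mul_div_assoc']
  rw [intervalIntegral.integral_deriv_div_eq_log_sub (fun t _ => hasDerivAt_fDenom hβ C a b t)
    (by fun_prop), fDenom_zero]
  rw [uIcc_of_le hT]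
  exact fun t ht => (fDenom_pos hβ C ha b ht.1).ne'

/-- Total contribution of the decaying rate `Ã₁(t) = 2√β·2C·f(2C,0,t)` of
flow 1 over the phase of duration `2C/β` in the SQF limit cycle. -/
theorem sqf_rate_decay_phase_integral (β C : ℝ) (hβ : 0 < β) (hC : 0 < C) :
    ∫ u in (0:ℝ)..(2 * C / β), 4 * C * Real.sqrt β * f β C (2 * C) 0 u =
      Real.log (1 + (2 * Real.sqrt (2 * Real.pi) * C / Real.sqrt β) *
        Real.exp (C ^ 2 / (2 * β)) * Erf (C / Real.sqrt (2 * β))) := by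
  have hT : 0 ≤ 2 * C / β := by positivity
  have hDT : fDenom β C (2 * C) 0 (2 * C / β) = 2 * √β *
      (1 + (2 * √(2 * π) * C / √β) * exp (C ^ 2 / (2 * β)) * Erf (C / √(2 * β))) := by
    rw [fDenom, show 0 - C + β * (2 * C / β) = C by field_simp; ring, zero_sub, neg_sq,
      neg_div, Erf_neg]
    field_simp
    ring
  have hpos : 0 < 1 + (2 * √(2 * π) * C / √β) * exp (C ^ 2 / (2 * β)) * Erf (C / √(2 * β)) := by
    have := Erf_nonneg (by positivity : 0 ≤ C / √(2 * β))
    positivity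
  simp_rw [show 4 * C * √β = 2 * (2 * C) * √β by ring]
  rw [integral_mul_f hβ C (by positivity) 0 hT, hDT, log_mul (by positivity) hpos.ne']
  ring
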